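/- Under the reactivation/reassembly schedule, all boundary points of S are occupied at any time when the first vertex (leader) of some ribbon becomes active: for every epoch T in the subtractive stage at which the active robot occupies the first vertex of a ribbon, every boundary point x of S satisfies that x has not yet been activated or has already been reoccupied. -/

import Mathlib

/-! A boundary point of `S` is never a hole, so it lies in `S \ D`. If it is a vertex of a
ribbon preceding ribbon `i`, the rearranged robots of that ribbon, all activated before the
leader of ribbon `i`, include one sent to it; otherwise no robot has been activated on it yet. -/

/-- Sixth root of unity direction: the triangular-lattice basis rotation. -/
noncomputable def w6 : ℂ := Complex.exp ((Real.pi : ℂ) / 3 * Complex.I)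

/-- The triangular (hexagonal) lattice with spacing `d`, as a set of points of the plane. -/
noncomputable def lat (d : ℝ) : Set ℂ :=
  {z | ∃ a b : ℤ, z = (d : ℂ) * ((a : ℂ) + (b : ℂ) * w6)}
/-- All ribbon vertices flattened in the complete tree order (largest ribbon first),
each ribbon listed in increasing ribbon order. -/
def flatR {M : ℕ} (ribbons : Fin M → List ℂ) : List ℂ := (List.ofFn ribbons).flatten

/-- `c(R)`: the number of vertices of the ribbon `R` lying in the hole set `D`. -/
def cR (D : Set ℂ) [DecidablePred (· ∈ D)] (R : List ℂ) : ℕ :=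
  (R.filter (fun x => decide (x ∈ D))).length

/-- Activation index of the first vertex of ribbon `i`. -/
def startIdx {M : ℕ} (ribbons : Fin M → List ℂ) (i : Fin M) : ℕ :=
  ∑ i' : Fin M, if i' < i then (ribbons i').length else 0

/-- The rearrangement targets: all vertices in `S \ D`, enumerated ribbon by ribbon in
the complete tree order (largest first), each ribbon in increasing ribbon order. -/
def rearrTargets {M : ℕ} (ribbons : Fin M → List ℂ) (S D : Set ℂ)
    [DecidablePred (· ∈ S)] [DecidablePred (· ∈ D)] : List ℂ :=
  (flatR ribbons).filter (fun x => decide (x ∈ S) && !(decide (x ∈ D)))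

/-- The index, among rearranged robots, of the robot activated at position `j` of
ribbon `i` (assuming `cR D (ribbons i) ≤ j`). -/
def rearrIdx {M : ℕ} (ribbons : Fin M → List ℂ) (D : Set ℂ) [DecidablePred (· ∈ D)]
    (i : Fin M) (j : ℕ) : ℕ :=
  (∑ i' : Fin M, if i' < i then (ribbons i').length - cR D (ribbons i') else 0) +
    (j - cR D (ribbons i))

theorem Fin.sum_ite_lt_add_le_sum_ite_lt {M : ℕ} (g : Fin M → ℕ) {t i : Fin M} (h : t < i) :
    (∑ j, if j < t then g j else 0) + g t ≤ ∑ j, if j < i then g j else 0 := by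
  simp only [← Finset.sum_filter, Finset.filter_gt_eq_Iio, Finset.sum_Iio_add_eq_sum_Iic]
  exact Finset.sum_le_sum_of_subset fun j hj => by
    simpa using (Finset.mem_Iic.1 hj).trans_lt h

namespace List

variable {α : Type*} {M : ℕ}

theorem length_flatten_take_ofFn (f : Fin M → List α) (t : Fin M) :
    ((ofFn f).take t).flatten.length = ∑ j, if j < t then (f j).length else 0 := by
  rw [length_flatten, map_take, map_ofFn, sum_take_ofFn, Finset.sum_filter]
  rfl

theorem flatten_ofFn_eq_append (f : Fin M → List α) (t : Fin M) :
    (ofFn f).flatten = ((ofFn f).take t).flatten ++ (f t ++ ((ofFn f).drop (t + 1)).flatten) := by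
  have ht : (t : ℕ) < (ofFn f).length := by simp
  rw [← flatten_cons, show f t = (ofFn f)[(t : ℕ)] by simp, ← drop_eq_getElem_cons ht,
    ← flatten_append, take_append_drop]

theorem getD_flatten_ofFn (f : Fin M → List α) (t : Fin M) {o : ℕ} (ho : o < (f t).length)
    (d : α) :
    (ofFn f).flatten.getD ((∑ j, if j < t then (f j).length else 0) + o) d = (f t)[o] := by
  rw [flatten_ofFn_eq_append f t, ← length_flatten_take_ofFn,
    getD_append_right _ _ _ _ (Nat.le_add_right _ _), Nat.add_sub_cancel_left,
    getD_append _ _ _ _ ho, getD_eq_getElem]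

theorem exists_lt_getD_flatten_ofFn_mem {f : Fin M → List α} {t : Fin M} {m : ℕ}
    (hm : m < ∑ j, if j < t then (f j).length else 0) (d : α) :
    ∃ j < t, (ofFn f).flatten.getD m d ∈ f j := by
  rw [← length_flatten_take_ofFn] at hm
  rw [flatten_ofFn_eq_append f t, getD_append _ _ _ _ hm, getD_eq_getElem]
  obtain ⟨l, hl, hx⟩ := mem_flatten.1 (getElem_mem hm)
  obtain ⟨k, hk, rfl⟩ := mem_take_iff_getElem.1 hl
  exact ⟨⟨k, by simpa using hk.trans_le (min_le_right _ _)⟩, by simpa [Fin.lt_def] using hk,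
    by simpa using hx⟩

end List

section Reassembly

variable {M : ℕ} (ribbons : Fin M → List ℂ) {S D : Set ℂ}
  [DecidablePred (· ∈ S)] [DecidablePred (· ∈ D)]

theorem length_filter_mem_diff {l : List ℂ} (hl : ∀ x ∈ l, x ∈ S) :
    (l.filter fun x => decide (x ∈ S) && !decide (x ∈ D)).length = l.length - cR D l := by
  have hfilter : (l.filter fun x => decide (x ∈ S) && !decide (x ∈ D)) =
      l.filter fun x => !decide (x ∈ D) :=
    List.filter_congr fun x hx => by simp [hl x hx]
  rw [hfilter, cR, List.length_eq_length_filter_add (l := l) (fun x => decide (x ∈ D))]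
  omega

theorem rearrTargets_eq_flatten :
    rearrTargets ribbons S D =
      (List.ofFn fun t =>
        (ribbons t).filter fun x => decide (x ∈ S) && !decide (x ∈ D)).flatten := by
  rw [rearrTargets, flatR, List.filter_flatten, List.map_ofFn]
  rfl

theorem tr_startIdx_add_eq {tr : ℕ → ℂ} (hsub : ∀ i : Fin M, ∀ x ∈ ribbons i, x ∈ S)
    (h_rearr : ∀ i : Fin M, ∀ j : ℕ, cR D (ribbons i) ≤ j → j < (ribbons i).length →
      tr (startIdx ribbons i + j) = (rearrTargets ribbons S D).getD (rearrIdx ribbons D i j) 0)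
    (t : Fin M) {o : ℕ}
    (ho : o < ((ribbons t).filter fun x => decide (x ∈ S) && !decide (x ∈ D)).length) :
    tr (startIdx ribbons t + (cR D (ribbons t) + o)) =
      ((ribbons t).filter fun x => decide (x ∈ S) && !decide (x ∈ D))[o] := by
  have hlen := length_filter_mem_diff (D := D) (hsub t)
  rw [h_rearr t _ (Nat.le_add_right _ _) (by omega), rearrTargets_eq_flatten, rearrIdx,
    Nat.add_sub_cancel_left]
  simp only [← length_filter_mem_diff (hsub _)]
  exact List.getD_flatten_ofFn _ t ho 0

end Reassembly

theorem stmt16_general {M : ℕ} (ribbons : Fin M → List ℂ)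
    (d : ℝ) (S D : Set ℂ)
    [DecidablePred (· ∈ S)] [DecidablePred (· ∈ D)]
    (tr : ℕ → ℂ)
    (hsub : ∀ i : Fin M, ∀ x ∈ ribbons i, x ∈ S)
    (hBdD : ∀ x ∈ S, (∃ y ∈ lat d, y ∉ S ∧ dist x y = d) → x ∉ D)
    (h_rearr : ∀ i : Fin M, ∀ j : ℕ, cR D (ribbons i) ≤ j → j < (ribbons i).length →
      tr (startIdx ribbons i + j) = (rearrTargets ribbons S D).getD (rearrIdx ribbons D i j) 0) :
    ∀ i : Fin M, ∀ x ∈ S, (∃ y ∈ lat d, y ∉ S ∧ dist x y = d) →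
      ((∀ m < startIdx ribbons i, (flatR ribbons).getD m 0 ≠ x) ∨
        (∃ m < startIdx ribbons i, tr m = x)) := by
  intro i x hxS hbd
  by_cases hx : ∃ t < i, x ∈ ribbons t
  · right
    obtain ⟨t, hti, hxt⟩ := hx
    have hxP : x ∈ (ribbons t).filter fun x => decide (x ∈ S) && !decide (x ∈ D) :=
      List.mem_filter.2 ⟨hxt, by simp [hxS, hBdD x hxS hbd]⟩
    obtain ⟨o, ho, rfl⟩ := List.mem_iff_getElem.1 hxP
    refine ⟨_, ?_, tr_startIdx_add_eq ribbons hsub h_rearr t ho⟩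
    have hnext := Fin.sum_ite_lt_add_le_sum_ite_lt (fun j => (ribbons j).length) hti
    have hlen := length_filter_mem_diff (D := D) (hsub t)
    have hcR : cR D (ribbons t) ≤ (ribbons t).length := List.length_filter_le _ _
    simp only [startIdx] at hnext ⊢
    omega
  · left
    intro m hm hxm
    obtain ⟨t, hti, hmem⟩ := List.exists_lt_getD_flatten_ofFn_mem hm 0
    exact hx ⟨t, hti, hxm ▸ hmem⟩

/-- Under the reactivation/reassembly schedule, all boundary points of
`S` (points of `S` adjacent to a lattice point outside `S`; such points are never in the
hole set `D`) are occupied whenever the first vertex (leader) of some ribbon becomes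
active: at each such epoch `startIdx i`, every boundary point `x` either has not yet
been activated, or has already been reoccupied by an earlier robot. -/
theorem stmt16 [DecidableEq ℂ] {M : ℕ} (ribbons : Fin M → List ℂ)
    (d : ℝ) (hd : 0 < d) (S D H2 : Set ℂ)
    [DecidablePred (· ∈ S)] [DecidablePred (· ∈ D)] [DecidablePred (· ∈ H2)]
    (tr : ℕ → ℂ)
    (hnodup : (flatR ribbons).Nodup)
    (hsub : ∀ i : Fin M, ∀ x ∈ ribbons i, x ∈ S)
    (hcover : ∀ x ∈ S, x ∈ flatR ribbons)
    (hDS : D ⊆ S)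
    (hH2 : ∀ x ∈ S, x ∉ H2)
    (hBdD : ∀ x ∈ S, (∃ y ∈ lat d, y ∉ S ∧ dist x y = d) → x ∉ D)
    (h_recycle : ∀ i : Fin M, ∀ j : ℕ, j < cR D (ribbons i) →
      tr (startIdx ribbons i + j) ∈ H2)
    (h_rearr : ∀ i : Fin M, ∀ j : ℕ, cR D (ribbons i) ≤ j → j < (ribbons i).length →
      tr (startIdx ribbons i + j) = (rearrTargets ribbons S D).getD (rearrIdx ribbons D i j) 0) :
    ∀ i : Fin M, ∀ x ∈ S, (∃ y ∈ lat d, y ∉ S ∧ dist x y = d) →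
      ((∀ m < startIdx ribbons i, (flatR ribbons).getD m 0 ≠ x) ∨
        (∃ m < startIdx ribbons i, tr m = x)) :=
  stmt16_general ribbons d S D tr hsub hBdD h_rearr
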